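/- arXiv:1508.03810 — 3 statements merged into one kernel-verified Lean document; each statement's English description precedes it below -/
import Mathlib

section
/- A graph G is an interval graph if and only if its vertex set admits a linear order < such that for all vertices u < v < w, if uw is an edge, then uv is an edge. -/
open SimpleGraph Set

/-- An MPT representation: each vertex gets a pointed interval `([s v, e v], p v)`
with `p v ∈ [s v, e v]`, and distinct vertices are adjacent iff both
distinguished points lie in both intervals. -/
def IsMPTRep {V : Type*} (G : SimpleGraph V) (s p e : V → ℝ) : Prop :=
  (∀ v, s v ≤ p v ∧ p v ≤ e v) ∧
  ∀ u v : V, u ≠ v →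
    (G.Adj u v ↔ p u ∈ Set.Icc (s v) (e v) ∧ p v ∈ Set.Icc (s u) (e u))

/-- A graph is a max point-tolerance (MPT) graph if it has an MPT representation. -/
def IsMPT {V : Type*} (G : SimpleGraph V) : Prop := ∃ s p e, IsMPTRep G s p e

/-- A graph is an interval graph if it is the intersection graph of closed real intervals. -/
def IsIntervalGraph {V : Type*} (G : SimpleGraph V) : Prop :=
  ∃ s e : V → ℝ, (∀ v, s v ≤ e v) ∧
    ∀ u v : V, u ≠ v →
      (G.Adj u v ↔ (Set.Icc (s u) (e u) ∩ Set.Icc (s v) (e v)).Nonempty)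

/-!
Ordering the vertices of an interval representation by left endpoint gives the umbrella
property: if `u < v < w` and `I_u` meets `I_w`, then `I_u` reaches past the left endpoint of
`I_v`. Conversely, given an umbrella order, send `v` to the interval from `v` to its last
neighbour after it; an edge `uv` with `u < v` is then exactly `v ≤ reach u`, by the umbrella
property. A finite linear order embeds in `ℝ`.
-/

section IntervalRep

variable {V α : Type*} [LinearOrder α]

lemma Set.Icc_inter_Icc_nonempty_iff {a b c d : α} (hab : a ≤ b) (hcd : c ≤ d) :
    (Icc a b ∩ Icc c d).Nonempty ↔ a ≤ d ∧ c ≤ b := by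
  rw [Icc_inter_Icc, nonempty_Icc]
  constructor
  · intro h
    exact ⟨le_sup_left.trans (h.trans inf_le_right), le_sup_right.trans (h.trans inf_le_left)⟩
  · rintro ⟨had, hcb⟩
    exact sup_le (le_inf hab had) (le_inf hcb hcd)

/-- Interval representation with endpoints in any linear order; `s u ≤ e v ∧ s v ≤ e u` says
that `[s u, e u]` meets `[s v, e v]`. -/
def IsIntervalRep (G : SimpleGraph V) (s e : V → α) : Prop :=
  (∀ v, s v ≤ e v) ∧ ∀ u v : V, u ≠ v → (G.Adj u v ↔ s u ≤ e v ∧ s v ≤ e u)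

lemma isIntervalGraph_iff_exists_isIntervalRep (G : SimpleGraph V) :
    IsIntervalGraph G ↔ ∃ s e : V → ℝ, IsIntervalRep G s e := by
  refine exists₂_congr fun s e => ⟨fun ⟨hse, hadj⟩ => ⟨hse, fun u v huv => ?_⟩,
    fun ⟨hse, hadj⟩ => ⟨hse, fun u v huv => ?_⟩⟩
  · rw [hadj u v huv, Set.Icc_inter_Icc_nonempty_iff (hse u) (hse v)]
  · rw [hadj u v huv, Set.Icc_inter_Icc_nonempty_iff (hse u) (hse v)]

namespace IsIntervalRep

variable {G : SimpleGraph V} {s e : V → α}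

lemma comp_strictMono {β : Type*} [LinearOrder β] (h : IsIntervalRep G s e) {f : α → β}
    (hf : StrictMono f) : IsIntervalRep G (f ∘ s) (f ∘ e) :=
  ⟨fun v => hf.monotone (h.1 v), fun u v huv => by simpa [hf.le_iff_le] using h.2 u v huv⟩

lemma adj_of_le_of_le (h : IsIntervalRep G s e) {u v w : V} (huv : s u ≤ s v) (hvw : s v ≤ s w)
    (hne_uv : u ≠ v) (hne_uw : u ≠ w) (hadj : G.Adj u w) : G.Adj u v := by
  have hwu : s w ≤ e u := ((h.2 u w hne_uw).1 hadj).2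
  exact (h.2 u v hne_uv).2 ⟨huv.trans (h.1 v), hvw.trans hwu⟩

end IsIntervalRep

end IntervalRep

lemma exists_linearOrder_lt_imp_le {V α : Type*} [LinearOrder α] (f : V → α) :
    ∃ lo : LinearOrder V, ∀ u v : V, lo.lt u v → f u ≤ f v := by
  let key : V → α ×ₗ Cardinal := fun v => toLex (f v, embeddingToCardinal v)
  have hkey : Function.Injective key := fun u v huv =>
    embeddingToCardinal.injective (congrArg (fun x => (ofLex x).2) huv)
  refine ⟨LinearOrder.lift' key hkey, fun u v huv => ?_⟩
  rcases Prod.Lex.lt_iff.1 huv with h | h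
  · exact h.le
  · exact h.1.le

lemma exists_isIntervalRep_id_of_umbrella {V : Type*} [LinearOrder V] [Finite V]
    {G : SimpleGraph V} (h : ∀ u v w : V, u < v → v < w → G.Adj u w → G.Adj u v) :
    ∃ e : V → V, IsIntervalRep G id e := by
  have hreach : ∀ u : V, ∃ r, (r = u ∨ u < r ∧ G.Adj u r) ∧
      ∀ w, u < w → G.Adj u w → w ≤ r := fun u => by
    obtain ⟨r, hr, hmax⟩ := Set.exists_max_image {w | w = u ∨ u < w ∧ G.Adj u w} id
      (Set.toFinite _) ⟨u, Or.inl rfl⟩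
    exact ⟨r, hr, fun w huw hadj => hmax w (Or.inr ⟨huw, hadj⟩)⟩
  choose e he hmax using hreach
  have hle : ∀ v, v ≤ e v := fun v => (he v).elim ge_of_eq fun h => h.1.le
  have hadj_iff : ∀ u v, u < v → (G.Adj u v ↔ v ≤ e u) := fun u v huv => by
    refine ⟨hmax u v huv, fun hve => ?_⟩
    rcases he u with heu | ⟨_, hadj⟩
    · exact absurd (heu ▸ hve) huv.not_ge
    · rcases hve.eq_or_lt with rfl | hlt
      · exact hadj
      · exact h u v (e u) huv hlt hadj
  refine ⟨e, hle, fun u v huv => ?_⟩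
  rcases huv.lt_or_gt with hlt | hgt
  · simpa [hlt.le.trans (hle v)] using hadj_iff u v hlt
  · simpa [hgt.le.trans (hle u), G.adj_comm u v] using hadj_iff v u hgt

/-- A graph is an interval graph iff its vertex set admits a linear order `<`
such that for all `u < v < w`, if `uw` is an edge then `uv` is an edge. -/
theorem intervalGraph_iff_iOrder {V : Type*} [Fintype V] (G : SimpleGraph V) :
    IsIntervalGraph G ↔ ∃ lo : LinearOrder V, ∀ u v w : V,
      lo.lt u v → lo.lt v w → G.Adj u w → G.Adj u v := by
  rw [isIntervalGraph_iff_exists_isIntervalRep]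
  constructor
  · rintro ⟨s, e, hrep⟩
    obtain ⟨lo, hlo⟩ := exists_linearOrder_lt_imp_le s
    let _ := lo
    exact ⟨lo, fun u v w huv hvw => hrep.adj_of_le_of_le (hlo u v huv) (hlo v w hvw) huv.ne
      (huv.trans hvw).ne⟩
  · rintro ⟨lo, humbrella⟩
    let _ := lo
    obtain ⟨e, hrep⟩ := exists_isIntervalRep_id_of_umbrella humbrella
    obtain ⟨f⟩ := Order.embedding_from_countable_to_dense (α := V) (β := ℝ)
    exact ⟨_, _, hrep.comp_strictMono f.strictMono⟩
end

section
/- If G is an MPT graph with a fixed MPT representation and v is a vertex of G, then the neighborhood N(v) can be partitioned into sets V_L and V_R such that the induced subgraphs G[V_L] and G[V_R] are interval graphs. -/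
open SimpleGraph Set

/-!
Every neighbour `u` of `v` has `p v ∈ [s u, e u]`. On the left side, all intervals therefore
reach past every point `p w` of that side, so two left neighbours are adjacent iff the left
halves `[s u, p u]` meet; the right side is the mirror image under `x ↦ -x`.
-/

namespace IsMPTRep

variable {V : Type*} {G : SimpleGraph V} {s p e : V → ℝ}

theorem neg (h : IsMPTRep G s p e) :
    IsMPTRep G (fun v => -e v) (fun v => -p v) (fun v => -s v) := by
  refine ⟨fun v => ⟨neg_le_neg (h.1 v).2, neg_le_neg (h.1 v).1⟩, fun u w huw => ?_⟩
  simp only [h.2 u w huw, mem_Icc, neg_le_neg_iff]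
  tauto

theorem mem_Icc_of_adj (h : IsMPTRep G s p e) {u v : V} (huv : G.Adj u v) :
    p u ∈ Icc (s v) (e v) :=
  ((h.2 u v huv.ne).1 huv).1

theorem adj_iff_of_le (h : IsMPTRep G s p e) {x : ℝ} {u w : V} (huw : u ≠ w)
    (hu : p u ≤ x ∧ x ≤ e u) (hw : p w ≤ x ∧ x ≤ e w) :
    G.Adj u w ↔ (Icc (s u) (p u) ∩ Icc (s w) (p w)).Nonempty := by
  have hsu := (h.1 u).1
  have hsw := (h.1 w).1
  rw [h.2 u w huw, Icc_inter_Icc, nonempty_Icc, max_le_iff, le_min_iff, le_min_iff,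
    mem_Icc, mem_Icc]
  constructor
  · rintro ⟨⟨hswu, -⟩, hsuw, -⟩
    exact ⟨⟨hsu, hsuw⟩, hswu, hsw⟩
  · rintro ⟨⟨-, hsuw⟩, hswu, -⟩
    exact ⟨⟨hswu, by linarith⟩, hsuw, by linarith⟩

theorem isIntervalGraph_induce_of_le (h : IsMPTRep G s p e) {S : Set V} (x : ℝ)
    (hS : ∀ u ∈ S, p u ≤ x ∧ x ≤ e u) : IsIntervalGraph (G.induce S) :=
  ⟨fun u => s u, fun u => p u, fun u => (h.1 u).1, fun u w huw =>
    h.adj_iff_of_le (Subtype.coe_injective.ne huw) (hS u u.2) (hS w w.2)⟩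

theorem isIntervalGraph_induce_of_ge (h : IsMPTRep G s p e) {S : Set V} (x : ℝ)
    (hS : ∀ u ∈ S, s u ≤ x ∧ x ≤ p u) : IsIntervalGraph (G.induce S) :=
  h.neg.isIntervalGraph_induce_of_le (-x) fun u hu =>
    ⟨neg_le_neg (hS u hu).2, neg_le_neg (hS u hu).1⟩

end IsMPTRep

/-- Given an MPT representation of `G` (with distinct distinguished points) and a
vertex `v`, the neighborhood of `v` is partitioned into `V_L` (neighbors with
point left of `p v`) and `V_R` (neighbors with point right of `p v`), and both
parts induce interval graphs. -/
theorem neighborhood_partition_interval {V : Type*} (G : SimpleGraph V)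
    (s p e : V → ℝ) (hrep : IsMPTRep G s p e) (hinj : Function.Injective p)
    (v : V) :
    let VL : Set V := {u | u ∈ G.neighborSet v ∧ p u < p v}
    let VR : Set V := {u | u ∈ G.neighborSet v ∧ p v < p u}
    VL ∪ VR = G.neighborSet v ∧ Disjoint VL VR ∧
      IsIntervalGraph (G.induce VL) ∧ IsIntervalGraph (G.induce VR) := by
  intro VL VR
  have hne : ∀ u ∈ G.neighborSet v, p u ≠ p v := fun u hu hpu =>
    G.ne_of_adj hu (hinj hpu).symm
  refine ⟨?_, ?_, ?_, ?_⟩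
  · ext u
    constructor
    · rintro (⟨hu, -⟩ | ⟨hu, -⟩) <;> exact hu
    · intro hu
      exact (hne u hu).lt_or_gt.imp (⟨hu, ·⟩) (⟨hu, ·⟩)
  · exact disjoint_left.2 fun u hl hr => lt_asymm hl.2 hr.2
  · exact hrep.isIntervalGraph_induce_of_le (p v) fun u hu =>
      ⟨hu.2.le, (hrep.mem_Icc_of_adj hu.1).2⟩
  · exact hrep.isIntervalGraph_induce_of_ge (p v) fun u hu =>
      ⟨(hrep.mem_Icc_of_adj hu.1).1, hu.2.le⟩
end

section
/- Let σ be an MPT-order of G = (V,E) constructed as a linear order v_1 < ... < v_n. Define for each i: s_i = min(i, min{j : v_j v_i ∈ E}) and e_i = max(i, max{j : v_i v_j ∈ E}), with p_i = i. Then the pointed intervals ([s_i, e_i], p_i) form an MPT representation of G; that is, for i < j, v_i v_j ∈ E iff s_j ≤ i and e_i ≥ j. -/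
open SimpleGraph Set

namespace SimpleGraph

def IsMPTOrder {α : Type*} [LinearOrder α] (G : SimpleGraph α) : Prop :=
  ∀ i j k l : α, i < j → j < k → k < l → G.Adj i k → G.Adj j l → G.Adj j k

theorem IsMPTOrder.adj_of_le_of_le {α : Type*} [LinearOrder α] {G : SimpleGraph α}
    (hG : G.IsMPTOrder) {a i j b : α} (hai : a ≤ i) (hij : i < j) (hjb : j ≤ b)
    (haj : G.Adj a j) (hib : G.Adj i b) : G.Adj i j := by
  rcases hai.eq_or_lt with rfl | hai
  · exact haj
  rcases hjb.eq_or_lt with rfl | hjb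
  · exact hib
  exact hG a i j b hai hij hjb haj hib

end SimpleGraph

theorem mptOrder_construction_is_rep_general {n : ℕ} (G : SimpleGraph (Fin n))
    (hord : ∀ i j k l : Fin n, i < j → j < k → k < l →
      G.Adj i k → G.Adj j l → G.Adj j k)
    (s e : Fin n → Fin n)
    (hs_min : ∀ i j : Fin n, G.Adj j i → s i ≤ j)
    (hs_mem : ∀ i, s i = i ∨ G.Adj (s i) i)
    (he_max : ∀ i j : Fin n, G.Adj i j → j ≤ e i)
    (he_mem : ∀ i, e i = i ∨ G.Adj i (e i)) :
    ∀ i j : Fin n, i < j → (G.Adj i j ↔ s j ≤ i ∧ j ≤ e i) := by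
  intro i j hij
  refine ⟨fun h => ⟨hs_min j i h, he_max i j h⟩, fun ⟨hsj, hei⟩ => ?_⟩
  have hsj_adj : G.Adj (s j) j :=
    (hs_mem j).resolve_left fun h => (h ▸ hsj).not_gt hij
  have hei_adj : G.Adj i (e i) :=
    (he_mem i).resolve_left fun h => (h ▸ hei).not_gt hij
  exact IsMPTOrder.adj_of_le_of_le hord hsj hij hei hsj_adj hei_adj

/-- From an MPT-order `v_0 < … < v_{n-1}` of `G`, defining
`s i = min(i, min {j | v_j v_i ∈ E})` and `e i = max(i, max {j | v_i v_j ∈ E})`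
with `p i = i` gives an MPT representation: for `i < j`,
`v_i v_j ∈ E` iff `s j ≤ i` and `j ≤ e i`. -/
theorem mptOrder_construction_is_rep {n : ℕ} (G : SimpleGraph (Fin n))
    (hord : ∀ i j k l : Fin n, i < j → j < k → k < l →
      G.Adj i k → G.Adj j l → G.Adj j k)
    (s e : Fin n → Fin n)
    (hs_le : ∀ i, s i ≤ i)
    (hs_min : ∀ i j : Fin n, G.Adj j i → s i ≤ j)
    (hs_mem : ∀ i, s i = i ∨ G.Adj (s i) i)
    (he_le : ∀ i, i ≤ e i)
    (he_max : ∀ i j : Fin n, G.Adj i j → j ≤ e i)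
    (he_mem : ∀ i, e i = i ∨ G.Adj i (e i)) :
    ∀ i j : Fin n, i < j → (G.Adj i j ↔ s j ≤ i ∧ j ≤ e i) :=
  mptOrder_construction_is_rep_general G hord s e hs_min hs_mem he_max he_mem
end
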